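/- arXiv:2106.02309 — 5 statements merged into one kernel-verified Lean document; each statement's English description precedes it below -/
import Mathlib

section
/- Let (Z, ≤) be a totally ordered set, P a partition of Z, X ⊆ Z, and P' = {P_1, …, P_m} ⊆ P. Then the following are equivalent: (1) for every k ∈ ℕ the finite string (P_1 ⋯ P_m)^k occurs in X; (2) the infinite string (P_1 ⋯ P_m)^ω is generated by X. -/
/-!
Cut an occurrence of `(P₁ ⋯ P_m)^(n+1)` into `n + 1` consecutive occurrences of the cycle
`P₁ ⋯ P_m`, each read as the interval from its first to its last letter. Call `x` crowded if for
every `n` some such run of `n + 1` cycles ends at or below `x`; crowdedness is upward closed. If to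
the right of every uncrowded point some cycle still ends at an uncrowded point, these cycles chain
upwards. Otherwise below every crowded point there is a cycle starting at a crowded point: trivially
if every point is crowded, and else because some uncrowded `x` has only crowded ends to its right,
while a run of cycles has only boundedly many cycles ending below `x`. These cycles chain
downwards. Taking the `j`-th letter from the `j`-th cycle of the chain gives the monotone sequence.
Conversely, a non-increasing sequence is read backwards, one letter from each period.
-/

open Function

lemma exists_seq_of_forall_exists {ι : Type*} {S : ι → Prop} {R : ι → ι → Prop}
    (h₀ : ∃ i, S i) (h : ∀ i, S i → ∃ j, S j ∧ R i j) :
    ∃ g : ℕ → ι, ∀ n, R (g n) (g (n + 1)) := by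
  obtain ⟨i₀, hi₀⟩ := h₀
  choose! f hfS hfR using h
  have hS : ∀ n, S (f^[n] i₀) := fun n => by
    induction n with
    | zero => exact hi₀
    | succ n ih => rw [iterate_succ_apply']; exact hfS _ ih
  exact ⟨fun n => f^[n] i₀, fun n => by simpa only [iterate_succ_apply'] using hfR _ (hS n)⟩

section Runs

variable {ι α : Type*} (first last : ι → α)

def IsRun [LE α] (f : ℕ → ι) (n : ℕ) : Prop :=
  ∀ j < n, last (f j) ≤ first (f (j + 1))

variable [LinearOrder α]

def Crowded (x : α) : Prop :=
  ∀ n, ∃ f, IsRun first last f n ∧ last (f n) ≤ x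

variable {first last}

lemma IsRun.mono {f : ℕ → ι} {n n' : ℕ} (hf : IsRun first last f n') (h : n ≤ n') :
    IsRun first last f n :=
  fun j hj => hf j (hj.trans_le h)

lemma crowded_mono : Monotone (Crowded first last) :=
  fun _ _ hxy hx n => (hx n).imp fun _ hf => ⟨hf.1, hf.2.trans hxy⟩

lemma exists_crowded_last_of_not_crowded {x : α} (hx : ¬Crowded first last x)
    (hright : ∀ i, x ≤ first i → Crowded first last (last i)) :
    ∃ N, ∀ f, IsRun first last f (N + 1) → Crowded first last (last (f (N + 1))) := by
  simp only [Crowded, not_forall, not_exists, not_and, not_le] at hx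
  obtain ⟨N, hN⟩ := hx
  exact ⟨N, fun f hf => hright _ ((hN f (hf.mono N.le_succ)).le.trans (hf N N.lt_succ_self))⟩

lemma exists_ascending_of_not_crowded {x₀ : α} (h₀ : ¬Crowded first last x₀)
    (h : ∀ x, ¬Crowded first last x → ∃ i, x ≤ first i ∧ ¬Crowded first last (last i)) :
    ∃ g : ℕ → ι, ∀ n, last (g n) ≤ first (g (n + 1)) :=
  exists_seq_of_forall_exists (S := fun i => ¬Crowded first last (last i))
    ((h x₀ h₀).imp fun _ => And.right) fun _ hi => (h _ hi).imp fun _ => And.symm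

lemma exists_descending_of_crowded {y₀ : α} (h₀ : Crowded first last y₀)
    (h : ∀ y, Crowded first last y → ∃ i, last i ≤ y ∧ Crowded first last (first i)) :
    ∃ g : ℕ → ι, ∀ n, last (g (n + 1)) ≤ first (g n) :=
  exists_seq_of_forall_exists (S := fun i => Crowded first last (first i))
    ((h y₀ h₀).imp fun _ => And.right) fun _ hi => (h _ hi).imp fun _ => And.symm

theorem exists_ascending_or_descending_of_forall_isRun (H : ∀ n, ∃ f, IsRun first last f n) :
    ∃ g : ℕ → ι,
      (∀ n, last (g n) ≤ first (g (n + 1))) ∨ ∀ n, last (g (n + 1)) ≤ first (g n) := by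
  by_cases hgap : ∃ x, ¬Crowded first last x ∧ ∀ i, x ≤ first i → Crowded first last (last i)
  · obtain ⟨x, hx, hright⟩ := hgap
    obtain ⟨N, hN⟩ := exists_crowded_last_of_not_crowded hx hright
    obtain ⟨f₀, hf₀⟩ := H (N + 1)
    refine (exists_descending_of_crowded (hN f₀ hf₀) fun y hy => ?_).imp fun _ => Or.inr
    obtain ⟨f, hf, hfy⟩ := hy (N + 2)
    exact ⟨f (N + 2), hfy, crowded_mono (hf (N + 1) (by omega)) (hN f (hf.mono (by omega)))⟩
  push Not at hgap
  by_cases hx : ∃ x, ¬Crowded first last x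
  · obtain ⟨x, hx⟩ := hx
    exact (exists_ascending_of_not_crowded hx hgap).imp fun _ => Or.inl
  push Not at hx
  obtain ⟨f, -⟩ := H 0
  refine (exists_descending_of_crowded (hx (first (f 0))) fun y hy => ?_).imp fun _ => Or.inr
  obtain ⟨f, -, hfy⟩ := hy 0
  exact ⟨f 0, hfy, hx _⟩

end Runs

lemma Function.Periodic.apply_mul_add {α : Type*} {f : ℕ → α} {m : ℕ} (hf : Periodic f m)
    (q r : ℕ) : f (m * q + r) = f r := by
  simpa [add_comm, mul_comm] using hf.nat_mul q r

section Occurrence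

variable {Z : Type*} [Preorder Z] {s : ℕ → Set Z} {m : ℕ}

def Occurrence (s : ℕ → Set Z) (n : ℕ) : Type _ :=
  {w : Fin n → Z // Monotone w ∧ ∀ j : Fin n, w j ∈ s j}

def Occurrence.cycle (hs : Periodic s m) {k : ℕ} (w : Occurrence s (m * k)) (i : ℕ) (hi : i < k) :
    Occurrence s m :=
  ⟨fun r => w.1 ⟨m * i + r, by nlinarith [r.isLt]⟩,
    fun _ _ h => w.2.1 (Fin.mk_le_mk.2 (by simpa using h)),
    fun r => by simpa only [hs.apply_mul_add] using w.2.2 ⟨m * i + r, by nlinarith [r.isLt]⟩⟩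

lemma exists_isRun_cycles [NeZero m] (hs : Periodic s m) {n : ℕ}
    (w : Occurrence s (m * (n + 1))) :
    ∃ f : ℕ → Occurrence s m, IsRun (fun c => c.1 ⊥) (fun c => c.1 ⊤) f n := by
  refine ⟨fun i => w.cycle hs (min i n) (by omega), fun j hj => w.2.1 (Fin.mk_le_mk.2 ?_)⟩
  rw [min_eq_left hj.le, min_eq_left hj, Fin.val_top, bot_eq_zero, Fin.val_zero, Nat.mul_succ]
  omega

lemma mul_sub_add_mod_le_of_le {m n j j' : ℕ} (hm : 0 < m) (h : j ≤ j') (hj' : j' < n) :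
    m * (n - j') + j' % m ≤ m * (n - j) + j % m := by
  rcases h.eq_or_lt with rfl | h
  · rfl
  calc m * (n - j') + j' % m ≤ m * (n - j') + m := by grw [Nat.mod_lt j' hm]
    _ = m * (n - j' + 1) := by ring
    _ ≤ m * (n - j) + j % m := le_add_right (Nat.mul_le_mul_left m (by omega))

lemma nonempty_occurrence_of_antitone (hs : Periodic s m) (hm : 0 < m) {y : ℕ → Z}
    (hy : Antitone y) (hys : ∀ j, y j ∈ s j) (n : ℕ) : Nonempty (Occurrence s n) :=
  ⟨⟨fun j => y (m * (n - j) + j % m), fun _ _ h => hy (mul_sub_add_mod_le_of_le hm h (Fin.is_lt _)),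
    fun j => by simpa only [hs.apply_mul_add, hs.map_mod_nat] using hys (m * (n - j) + j % m)⟩⟩

end Occurrence

section Periodic

variable {Z : Type*} [LinearOrder Z] {s : ℕ → Set Z} {m : ℕ} [NeZero m]

theorem exists_monotone_or_antitone_of_forall_occurrence (hs : Periodic s m)
    (H : ∀ k, Nonempty (Occurrence s (m * k))) :
    ∃ y : ℕ → Z, (Monotone y ∨ Antitone y) ∧ ∀ j, y j ∈ s j := by
  obtain ⟨g, hg⟩ := exists_ascending_or_descending_of_forall_isRun
    fun n => exists_isRun_cycles hs (H (n + 1)).some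
  refine ⟨fun j => (g j).1 (Fin.ofNat m j), hg.imp (fun hg => monotone_nat_of_le_succ fun j => ?_)
    (fun hg => antitone_nat_of_succ_le fun j => ?_), fun j => ?_⟩
  · exact ((g j).2.1 le_top).trans ((hg j).trans ((g (j + 1)).2.1 bot_le))
  · exact ((g (j + 1)).2.1 le_top).trans ((hg j).trans ((g j).2.1 bot_le))
  · simpa only [Fin.val_ofNat, hs.map_mod_nat] using (g j).2.2 (Fin.ofNat m j)

theorem forall_nonempty_occurrence_iff (hs : Periodic s m) :
    (∀ k, Nonempty (Occurrence s (m * k))) ↔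
      ∃ y : ℕ → Z, (Monotone y ∨ Antitone y) ∧ ∀ j, y j ∈ s j := by
  refine ⟨exists_monotone_or_antitone_of_forall_occurrence hs, ?_⟩
  rintro ⟨y, hy | hy, hys⟩ k
  · exact ⟨⟨fun j => y j, fun _ _ h => hy h, fun j => hys j⟩⟩
  · exact nonempty_occurrence_of_antitone hs (NeZero.pos m) hy hys _

end Periodic

theorem occurs_all_powers_iff_generated_omega_general {Z : Type*} [LinearOrder Z]
    (X : Set Z)
    (m : ℕ) (hm : 0 < m) (p : Fin m → Set Z) :
    (∀ k : ℕ, ∃ x : Fin (m * k) → Z, Monotone x ∧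
        ∀ j : Fin (m * k), x j ∈ X ∧ x j ∈ p ⟨(j : ℕ) % m, Nat.mod_lt _ hm⟩) ↔
    (∃ x : ℕ → Z, (Monotone x ∨ Antitone x) ∧
        ∀ j : ℕ, x j ∈ X ∧ x j ∈ p ⟨j % m, Nat.mod_lt _ hm⟩) := by
  have : NeZero m := ⟨hm.ne'⟩
  have hs : Periodic (fun j => X ∩ p ⟨j % m, Nat.mod_lt _ hm⟩) m := fun j => by
    simp only [Nat.add_mod_right]
  simpa only [Occurrence, nonempty_subtype, Set.mem_inter_iff] using
    forall_nonempty_occurrence_iff hs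

/-- For a finite subset `{P₁, …, P_m}` of a partition `P` of a totally ordered set `Z` and
`X ⊆ Z`: every finite power `(P₁ ⋯ P_m)^k` occurs in `X` (via a non-decreasing tuple of
elements of `X`) if and only if the infinite string `(P₁ ⋯ P_m)^ω` is generated by `X`
(via a monotone sequence of elements of `X`). -/
theorem occurs_all_powers_iff_generated_omega {Z : Type*} [LinearOrder Z]
    (P : Set (Set Z)) (hP : Setoid.IsPartition P) (X : Set Z)
    (m : ℕ) (hm : 0 < m) (p : Fin m → Set Z)
    (hinj : Function.Injective p) (hp : ∀ i, p i ∈ P) :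
    (∀ k : ℕ, ∃ x : Fin (m * k) → Z, Monotone x ∧
        ∀ j : Fin (m * k), x j ∈ X ∧ x j ∈ p ⟨(j : ℕ) % m, Nat.mod_lt _ hm⟩) ↔
    (∃ x : ℕ → Z, (Monotone x ∨ Antitone x) ∧
        ∀ j : ℕ, x j ∈ X ∧ x j ∈ p ⟨j % m, Nat.mod_lt _ hm⟩) :=
  occurs_all_powers_iff_generated_omega_general X m hm p
end

section
/- Let (Z, ≤) be a totally ordered set and P a partition of Z. Let C ⊆ Z be a convex entangled set, and suppose C_1 and C_2 are convex sets with C = C_1 ∪ C_2. Then there exists i ∈ {1, 2} such that C_i is entangled and P_{C_i} = P_C. -/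
/-- A convex subset of a totally ordered set. -/
def IsConvexSet {Z : Type*} [LinearOrder Z] (C : Set Z) : Prop :=
  ∀ ⦃x y z : Z⦄, x ∈ C → z ∈ C → x ≤ y → y ≤ z → y ∈ C

/-- `𝒫_X`: the elements of the partition `P` meeting `X`. -/
def PartsMeeting {Z : Type*} (P : Set (Set Z)) (X : Set Z) : Set (Set Z) :=
  {A ∈ P | (A ∩ X).Nonempty}

/-- The infinite string `(p 0 ⋯ p (m-1))^ω` is generated by `X`: there is a monotone
sequence of elements of `X` following the cyclic pattern `p`. -/
def GeneratesOmega {Z : Type*} [LinearOrder Z] (X : Set Z) (m : ℕ) (p : Fin m → Set Z) : Prop :=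
  ∃ hm : 0 < m, ∃ x : ℕ → Z, (Monotone x ∨ Antitone x) ∧
    ∀ j : ℕ, x j ∈ X ∧ x j ∈ p ⟨j % m, Nat.mod_lt _ hm⟩

/-- `X` is entangled (with respect to the partition `P`): the set `𝒫_X` of parts meeting `X`
can be enumerated as `P₁, …, P_m` so that `(P₁ ⋯ P_m)^ω` is generated by `X`. -/
def EntangledSet {Z : Type*} [LinearOrder Z] (P : Set (Set Z)) (X : Set Z) : Prop :=
  ∃ (m : ℕ) (p : Fin m → Set Z), Function.Injective p ∧
    Set.range p = PartsMeeting P X ∧ GeneratesOmega X m p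

/-!
Follow a monotone sequence `x` generating `(P₁ ⋯ P_m)^ω` inside `C = C₁ ∪ C₂`. The indices `j`
with `x j ∈ C₁` form a convex subset of `ℕ`, so either they contain a tail of `ℕ` or their
complement does, so a tail of `x` stays in one `Cᵢ`. Dropping a multiple of `m`
initial terms keeps the cyclic pattern, so `Cᵢ` generates `(P₁ ⋯ P_m)^ω` as well, and then every
`Pₖ` meets `Cᵢ`, whence `𝒫_{Cᵢ} = 𝒫_C`.
-/

open Filter

lemma IsConvexSet.preimage {α Z : Type*} [LinearOrder α] [LinearOrder Z] {C : Set Z}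
    (hC : IsConvexSet C) {x : α → Z} (hx : Monotone x ∨ Antitone x) :
    IsConvexSet (x ⁻¹' C) := by
  intro i j k hi hk hij hjk
  rcases hx with hx | hx
  · exact hC hi hk (hx hij) (hx hjk)
  · exact hC hk hi (hx hjk) (hx hij)

lemma IsConvexSet.eventually_mem_or_eventually_mem {α : Type*} [LinearOrder α] [Nonempty α]
    [NoMaxOrder α] {A B : Set α} (hA : IsConvexSet A) (hcover : ∀ j, j ∈ A ∨ j ∈ B) :
    (∀ᶠ j in atTop, j ∈ A) ∨ (∀ᶠ j in atTop, j ∈ B) := by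
  by_cases hbdd : BddAbove A
  · obtain ⟨M, hM⟩ := hbdd
    refine Or.inr ?_
    filter_upwards [eventually_gt_atTop M] with j hj
    exact (hcover j).resolve_left fun hjA => (hM hjA).not_gt hj
  · obtain ⟨a, ha, -⟩ := not_bddAbove_iff.1 hbdd (Classical.arbitrary α)
    refine Or.inl (eventually_atTop.2 ⟨a, fun j haj => ?_⟩)
    obtain ⟨k, hk, hjk⟩ := not_bddAbove_iff.1 hbdd j
    exact hA ha hk haj hjk.le

lemma partsMeeting_mono {Z : Type*} (P : Set (Set Z)) {X Y : Set Z} (hXY : X ⊆ Y) :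
    PartsMeeting P X ⊆ PartsMeeting P Y :=
  fun _ ⟨hA, hAX⟩ => ⟨hA, hAX.mono (Set.inter_subset_inter_right _ hXY)⟩

section Entangled

variable {Z : Type*} [LinearOrder Z]

lemma GeneratesOmega.inter_nonempty {X : Set Z} {m : ℕ} {p : Fin m → Set Z}
    (hgen : GeneratesOmega X m p) (k : Fin m) : (p k ∩ X).Nonempty := by
  obtain ⟨hm, x, -, hx⟩ := hgen
  have hk : (⟨k.val % m, Nat.mod_lt _ hm⟩ : Fin m) = k := Fin.ext (Nat.mod_eq_of_lt k.isLt)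
  have hxk := (hx k).2
  rw [hk] at hxk
  exact ⟨x k, hxk, (hx k).1⟩

lemma GeneratesOmega.of_eventually {X : Set Z} {m : ℕ} {p : Fin m → Set Z} (hm : 0 < m)
    {x : ℕ → Z} (hmono : Monotone x ∨ Antitone x)
    (hx : ∀ j, x j ∈ p ⟨j % m, Nat.mod_lt _ hm⟩) (hX : ∀ᶠ j in atTop, x j ∈ X) :
    GeneratesOmega X m p := by
  obtain ⟨N, hN⟩ := eventually_atTop.1 hX
  have hshift : Monotone (· + m * N) := fun _ _ h => Nat.add_le_add_right h _
  refine ⟨hm, fun j => x (j + m * N), hmono.imp (·.comp hshift) (·.comp_monotone hshift),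
    fun j => ⟨?_, ?_⟩⟩
  · exact hN _ (Nat.le_add_left_of_le (Nat.le_mul_of_pos_left N hm))
  · simpa only [Nat.add_mul_mod_self_left] using hx (j + m * N)

lemma entangledSet_of_generatesOmega {P : Set (Set Z)} {C D : Set Z} (hDC : D ⊆ C) {m : ℕ}
    {p : Fin m → Set Z} (hinj : Function.Injective p) (hrange : Set.range p = PartsMeeting P C)
    (hgen : GeneratesOmega D m p) :
    EntangledSet P D ∧ PartsMeeting P D = PartsMeeting P C := by
  have hrangeD : Set.range p = PartsMeeting P D := by
    refine (Set.range_subset_iff.2 fun k => ?_).antisymm (hrange ▸ partsMeeting_mono P hDC)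
    exact ⟨(hrange.subset (Set.mem_range_self k)).1, hgen.inter_nonempty k⟩
  exact ⟨⟨m, p, hinj, hrangeD, hgen⟩, hrangeD ▸ hrange⟩

end Entangled

theorem entangled_of_union_convex_general {Z : Type*} [LinearOrder Z] (P : Set (Set Z))
    (C C₁ C₂ : Set Z)
    (hCent : EntangledSet P C)
    (h₁ : IsConvexSet C₁) (hU : C = C₁ ∪ C₂) :
    (EntangledSet P C₁ ∧ PartsMeeting P C₁ = PartsMeeting P C) ∨
    (EntangledSet P C₂ ∧ PartsMeeting P C₂ = PartsMeeting P C) := by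
  subst hU
  obtain ⟨m, p, hinj, hrange, hm, x, hmono, hx⟩ := hCent
  have hcover : ∀ j, j ∈ x ⁻¹' C₁ ∨ j ∈ x ⁻¹' C₂ := fun j => (hx j).1
  have hpattern : ∀ j, x j ∈ p ⟨j % m, Nat.mod_lt _ hm⟩ := fun j => (hx j).2
  rcases (h₁.preimage hmono).eventually_mem_or_eventually_mem hcover with h | h
  · exact Or.inl <| entangledSet_of_generatesOmega Set.subset_union_left hinj hrange
      (.of_eventually hm hmono hpattern h)
  · exact Or.inr <| entangledSet_of_generatesOmega Set.subset_union_right hinj hrange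
      (.of_eventually hm hmono hpattern h)

/-- If a convex entangled set `C` is the union of two convex sets `C₁`, `C₂`, then one of
the two is entangled and meets exactly the same parts of the partition as `C`. -/
theorem entangled_of_union_convex {Z : Type*} [LinearOrder Z] (P : Set (Set Z))
    (hP : Setoid.IsPartition P) (C C₁ C₂ : Set Z)
    (hC : IsConvexSet C) (hCent : EntangledSet P C)
    (h₁ : IsConvexSet C₁) (h₂ : IsConvexSet C₂) (hU : C = C₁ ∪ C₂) :
    (EntangledSet P C₁ ∧ PartsMeeting P C₁ = PartsMeeting P C) ∨
    (EntangledSet P C₂ ∧ PartsMeeting P C₂ = PartsMeeting P C) :=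
  entangled_of_union_convex_general P C C₁ C₂ hCent h₁ hU
end

section
/- Let B be a DFA. Then ent(B) ≤ width(B). -/
/-- A deterministic finite automaton with a (possibly partial) transition function,
a unique initial state and a set of final states. -/
structure PDFA (α : Type*) (σ : Type*) where
  step : σ → α → Option σ
  start : σ
  accept : Set σ

namespace PDFA

variable {α : Type*} {σ : Type*}

/-- The transition function extended to strings (read left to right). -/
def evalFrom (M : PDFA α σ) : σ → List α → Option σ
  | q, [] => some q
  | q, a :: w =>
    match M.step q a with
    | none => none
    | some q' => M.evalFrom q' w

/-- `δ(s, w)`. -/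
def eval (M : PDFA α σ) (w : List α) : Option σ :=
  M.evalFrom M.start w

/-- The language accepted by the automaton. -/
def language (M : PDFA α σ) : Set (List α) :=
  {w | ∃ q, M.eval w = some q ∧ q ∈ M.accept}

/-- `Pref(L(M))`: the set of prefixes of accepted words. -/
def prefLang (M : PDFA α σ) : Set (List α) :=
  {w | ∃ v, w ++ v ∈ M.language}

/-- `I_q`: the words of `Pref(L(M))` reaching state `q`. -/
def I (M : PDFA α σ) (q : σ) : Set (List α) :=
  {w | w ∈ M.prefLang ∧ M.eval w = some q}

/-- Every state is reachable from the initial state, and from every state a final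
state can be reached. -/
def Trim (M : PDFA α σ) : Prop :=
  (∀ q : σ, ∃ w : List α, M.eval w = some q) ∧
  (∀ q : σ, ∃ w : List α, ∃ q' : σ, M.evalFrom q w = some q' ∧ q' ∈ M.accept)

variable [LinearOrder α]

/-- A sequence of words which is monotone (non-decreasing or non-increasing) in the
co-lexicographic order (i.e., lexicographic order of the reversed words). -/
def MonotoneColex (x : ℕ → List α) : Prop :=
  (∀ i j : ℕ, i ≤ j → (x i).reverse ≤ (x j).reverse) ∨
  (∀ i j : ℕ, i ≤ j → (x j).reverse ≤ (x i).reverse)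

/-- A set of states is entangled if a single monotone sequence of words of
`Pref(L(M))` reaches each of its states infinitely many times. -/
def EntangledStates (M : PDFA α σ) (S : Set σ) : Prop :=
  ∃ x : ℕ → List α, (∀ i, x i ∈ M.prefLang) ∧ MonotoneColex x ∧
    ∀ q ∈ S, ∀ n : ℕ, ∃ i : ℕ, n ≤ i ∧ M.eval (x i) = some q

/-- `ent(M)`: the maximum cardinality of an entangled set of states. -/
noncomputable def ent (M : PDFA α σ) [Fintype σ] : ℕ :=
  sSup {n : ℕ | ∃ S : Finset σ, S.card = n ∧ M.EntangledStates ↑S}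

/-- The strict co-lex partial order on states: `q₁ ≺ q₂` iff `q₁ ≠ q₂` and every word
reaching `q₁` is co-lexicographically smaller than every word reaching `q₂`. -/
def stateLt (M : PDFA α σ) (q₁ q₂ : σ) : Prop :=
  q₁ ≠ q₂ ∧ ∀ u ∈ M.I q₁, ∀ v ∈ M.I q₂, u.reverse < v.reverse

/-- A set of states which is an antichain for the co-lex partial order. -/
def IsColexAntichain (M : PDFA α σ) (S : Set σ) : Prop :=
  ∀ q₁ ∈ S, ∀ q₂ ∈ S, q₁ ≠ q₂ → ¬ M.stateLt q₁ q₂ ∧ ¬ M.stateLt q₂ q₁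

/-- `width(M)`: the maximum cardinality of a co-lex antichain of states. -/
noncomputable def width (M : PDFA α σ) [Fintype σ] : ℕ :=
  sSup {n : ℕ | ∃ S : Finset σ, S.card = n ∧ M.IsColexAntichain ↑S}

/-- `V` is convex in `(Pref(L(M)), ⪯)`. -/
def ConvexIn (M : PDFA α σ) (V : Set (List α)) : Prop :=
  ∀ ⦃u v w : List α⦄, u ∈ V → w ∈ V → v ∈ M.prefLang →
    u.reverse ≤ v.reverse → v.reverse ≤ w.reverse → v ∈ V

/-- A set of words `V` is entangled in `M` if some monotone sequence of elements of `V`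
passes through each state occurring in `V` infinitely many times. -/
def EntangledWords (M : PDFA α σ) (V : Set (List α)) : Prop :=
  ∃ x : ℕ → List α, (∀ i, x i ∈ V) ∧ MonotoneColex x ∧
    ∀ q : σ, (∃ w ∈ V, M.eval w = some q) →
      ∀ n : ℕ, ∃ i : ℕ, n ≤ i ∧ M.eval (x i) = some q

/-- An entangled convex (e.c.) decomposition of `M`: a partition of `Pref(L(M))` into
convex, entangled sets. -/
def IsECD (M : PDFA α σ) (V : Set (Set (List α))) : Prop :=
  (⋃₀ V) = M.prefLang ∧ V.Pairwise Disjoint ∧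
    ∀ W ∈ V, M.ConvexIn W ∧ M.EntangledWords W

/-- A minimum-size e.c. decomposition: a finite e.c. decomposition of minimum cardinality. -/
def IsMinECD (M : PDFA α σ) (V : Set (Set (List α))) : Prop :=
  V.Finite ∧ M.IsECD V ∧
    ∀ V' : Set (Set (List α)), V'.Finite → M.IsECD V' → V.ncard ≤ V'.ncard

/-- The equivalence relation `∼_𝒱`: two words are equivalent iff they reach the same state
and every element of `𝒱` lying strictly co-lexicographically between them intersects `I_q`. -/
def simV (M : PDFA α σ) (V : Set (Set (List α))) (u v : List α) : Prop :=
  M.eval u = M.eval v ∧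
  ∀ W ∈ V,
    (∀ w ∈ W, min u.reverse v.reverse < w.reverse ∧ w.reverse < max u.reverse v.reverse) →
    ∃ w ∈ W, M.eval w = M.eval u

/-- The decomposition-free characterization of `∼`: the two words reach the same state and
the co-lex interval between them is covered by finitely many convex sets, each entangled in
`M` and intersecting `I_q`. -/
def simR (M : PDFA α σ) (u v : List α) : Prop :=
  M.eval u = M.eval v ∧
  ∃ (n : ℕ) (C : Fin n → Set (List α)),
    (∀ i, C i ⊆ M.prefLang ∧ M.ConvexIn (C i) ∧ M.EntangledWords (C i) ∧
      ∃ w ∈ C i, M.eval w = M.eval u) ∧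
    ∀ w ∈ M.prefLang,
      min u.reverse v.reverse ≤ w.reverse → w.reverse ≤ max u.reverse v.reverse →
      w ∈ ⋃ i, C i

end PDFA

namespace PDFA

variable {α σ : Type*} [LinearOrder α] {M : PDFA α σ} {S : Set σ}

/-- Along a monotone sequence visiting both `a` and `b` infinitely often, some visit of `a`
comes after a visit of `b` in the direction of monotonicity, so `a ≺ b` fails. -/
theorem EntangledStates.not_stateLt (hS : M.EntangledStates S) {a b : σ} (ha : a ∈ S)
    (hb : b ∈ S) : ¬ M.stateLt a b := by
  rintro ⟨-, hlt⟩
  obtain ⟨x, hpref, hmono, hvisit⟩ := hS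
  have reach (q : σ) (hq : q ∈ S) (n : ℕ) : ∃ i, n ≤ i ∧ x i ∈ M.I q := by
    obtain ⟨i, hni, hi⟩ := hvisit q hq n
    exact ⟨i, hni, hpref i, hi⟩
  obtain ⟨i, -, hi⟩ := reach b hb 0
  obtain ⟨j, hij, hj⟩ := reach a ha i
  obtain ⟨k, hjk, hk⟩ := reach b hb j
  rcases hmono with hup | hdown
  · exact (hup i j hij).not_gt (hlt _ hj _ hi)
  · exact (hdown j k hjk).not_gt (hlt _ hj _ hk)

theorem EntangledStates.isColexAntichain (hS : M.EntangledStates S) :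
    M.IsColexAntichain S :=
  fun _ h₁ _ h₂ _ => ⟨hS.not_stateLt h₁ h₂, hS.not_stateLt h₂ h₁⟩

end PDFA

theorem ent_le_width_general {α σ : Type*} [LinearOrder α] [Fintype σ]
    (M : PDFA α σ) :
    M.ent ≤ M.width := by
  have hbdd : BddAbove {n : ℕ | ∃ S : Finset σ, S.card = n ∧ M.IsColexAntichain ↑S} := by
    refine ⟨Fintype.card σ, ?_⟩
    rintro n ⟨S, rfl, -⟩
    exact S.card_le_univ
  exact csSup_le_csSup' hbdd fun n ⟨S, hcard, hS⟩ => ⟨S, hcard, hS.isColexAntichain⟩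

/-- Lemma: for every (trim) DFA, the entanglement number is at most the width. -/
theorem ent_le_width {α σ : Type*} [LinearOrder α] [Fintype σ]
    (M : PDFA α σ) (hM : M.Trim) :
    M.ent ≤ M.width :=
  ent_le_width_general M
end

section
/- If A is the minimum DFA recognizing a regular language L, then ent(A) = ent(L); that is, ent(A) ≤ ent(B) for every DFA B with L(B) = L. -/
/-!
The state that a trim DFA reaches on a prefix `u` of `L` has right language `u⁻¹L`, and in the
minimum DFA distinct states have distinct right languages, since merging two states with equal
right languages yields a smaller automaton for `L`. Hence on `Pref(L)` the state of the minimum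
DFA `A` is a function of the state of any DFA `B` for `L`. If a monotone sequence witnesses that
a set `S` of states of `A` is entangled, pigeonhole attaches to each `q ∈ S` a state of `B` that
the sequence visits infinitely often while in `q`; this assignment is injective and its image
is entangled in `B`, witnessed by the same sequence.
-/

open Filter

namespace PDFA

variable {α σ τ : Type*}

section Residual

variable (M : PDFA α σ)

theorem evalFrom_cons (q : σ) (a : α) (w : List α) :
    M.evalFrom q (a :: w) = (M.step q a).bind fun p => M.evalFrom p w := by
  cases h : M.step q a <;> simp [evalFrom, h]

theorem evalFrom_append (q : σ) (u v : List α) :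
    M.evalFrom q (u ++ v) = (M.evalFrom q u).bind fun p => M.evalFrom p v := by
  induction u generalizing q with
  | nil => rfl
  | cons a u ih =>
    rw [List.cons_append, evalFrom_cons, evalFrom_cons]
    cases M.step q a <;> simp [ih]

theorem exists_eval_eq_some_of_mem_prefLang {w : List α} (h : w ∈ M.prefLang) :
    ∃ q, M.eval w = some q := by
  obtain ⟨v, q, hq, -⟩ := h
  rw [eval, evalFrom_append] at hq
  cases hw : M.evalFrom M.start w with
  | none => simp [hw] at hq
  | some p => exact ⟨p, hw⟩

theorem prefLang_eq_of_language_eq {N : PDFA α τ} (h : M.language = N.language) :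
    M.prefLang = N.prefLang := by
  simp only [prefLang, h]

def residual (q : σ) : Set (List α) :=
  {w | ∃ f, M.evalFrom q w = some f ∧ f ∈ M.accept}

variable {M}

theorem nil_mem_residual_iff {q : σ} : [] ∈ M.residual q ↔ q ∈ M.accept := by
  simp [residual, evalFrom]

theorem cons_mem_residual_iff {q y : σ} {a : α} (h : M.step q a = some y) (w : List α) :
    a :: w ∈ M.residual q ↔ w ∈ M.residual y := by
  simp only [residual, Set.mem_ofPred_eq, evalFrom, h]

theorem cons_notMem_residual {q : σ} {a : α} (h : M.step q a = none) (w : List α) :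
    a :: w ∉ M.residual q := by
  simp [residual, evalFrom, h]

theorem residual_eq_leftQuotient {u : List α} {q : σ} (h : M.eval u = some q) :
    M.residual q = Language.leftQuotient M.language u := by
  ext z
  change _ ↔ ∃ f, M.eval (u ++ z) = some f ∧ f ∈ M.accept
  rw [eval, evalFrom_append, ← eval, h]
  rfl

theorem Trim.residual_nonempty (hM : M.Trim) (q : σ) : (M.residual q).Nonempty :=
  (hM.2 q).imp fun _ h => h

theorem exists_step_eq_some_residual_eq {p q y : σ} {a : α}
    (hpq : M.residual p = M.residual q) (hy : M.step p a = some y)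
    (hy_ne : (M.residual y).Nonempty) :
    ∃ y', M.step q a = some y' ∧ M.residual y = M.residual y' := by
  obtain ⟨w, hw⟩ := hy_ne
  have hq : a :: w ∈ M.residual q := by rwa [← hpq, cons_mem_residual_iff hy]
  cases hqa : M.step q a with
  | none => exact absurd hq (cons_notMem_residual hqa w)
  | some y' =>
    refine ⟨y', rfl, Set.ext fun z => ?_⟩
    rw [← cons_mem_residual_iff hy, ← cons_mem_residual_iff hqa, hpq]

theorem map_step_eq_of_residual_eq (hco : ∀ q, (M.residual q).Nonempty) {f : σ → τ}
    (hf : ∀ p q, M.residual p = M.residual q → f p = f q) {p q : σ}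
    (hpq : M.residual p = M.residual q) (a : α) :
    (M.step p a).map f = (M.step q a).map f := by
  cases hp : M.step p a with
  | none =>
    cases hq : M.step q a with
    | none => rfl
    | some y' =>
      obtain ⟨y, hy, -⟩ := exists_step_eq_some_residual_eq hpq.symm hq (hco y')
      simp [hp] at hy
  | some y =>
    obtain ⟨y', hy', hyy'⟩ := exists_step_eq_some_residual_eq hpq hp (hco y)
    simp [hy', hf y y' hyy']

end Residual

section Morphism

structure IsMorphism (M : PDFA α σ) (N : PDFA α τ) (f : σ → τ) : Prop where
  map_start : f M.start = N.start
  step_map : ∀ q a, N.step (f q) a = (M.step q a).map f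
  map_mem_accept_iff : ∀ q, f q ∈ N.accept ↔ q ∈ M.accept

variable {M : PDFA α σ} {N : PDFA α τ} {f : σ → τ}

theorem IsMorphism.evalFrom_map (hf : M.IsMorphism N f) (q : σ) (w : List α) :
    N.evalFrom (f q) w = (M.evalFrom q w).map f := by
  induction w generalizing q with
  | nil => rfl
  | cons a w ih =>
    rw [evalFrom_cons, evalFrom_cons, hf.step_map]
    cases M.step q a <;> simp [ih]

theorem IsMorphism.eval_map (hf : M.IsMorphism N f) (w : List α) :
    N.eval w = (M.eval w).map f := by
  rw [eval, eval, ← hf.map_start, hf.evalFrom_map]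

theorem IsMorphism.language_eq (hf : M.IsMorphism N f) : N.language = M.language := by
  ext w
  simp only [language, Set.mem_ofPred_eq, hf.eval_map]
  constructor
  · rintro ⟨_, hw, hacc⟩
    obtain ⟨q, hq, rfl⟩ := Option.map_eq_some_iff.1 hw
    exact ⟨q, hq, (hf.map_mem_accept_iff q).1 hacc⟩
  · rintro ⟨q, hq, hacc⟩
    exact ⟨f q, by rw [hq, Option.map_some], (hf.map_mem_accept_iff q).2 hacc⟩

theorem IsMorphism.trim (hf : M.IsMorphism N f) (hsurj : Function.Surjective f)
    (hM : M.Trim) : N.Trim := by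
  refine ⟨fun i => ?_, fun i => ?_⟩
  · obtain ⟨q, rfl⟩ := hsurj i
    obtain ⟨w, hw⟩ := hM.1 q
    exact ⟨w, by rw [hf.eval_map, hw, Option.map_some]⟩
  · obtain ⟨q, rfl⟩ := hsurj i
    obtain ⟨w, q', hw, hacc⟩ := hM.2 q
    exact ⟨w, f q', by rw [hf.evalFrom_map, hw, Option.map_some],
      (hf.map_mem_accept_iff q').2 hacc⟩

def pushforward (M : PDFA α σ) (f : σ → τ) (g : τ → σ) : PDFA α τ where
  step i a := (M.step (g i) a).map f
  start := f M.start
  accept := g ⁻¹' M.accept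

theorem isMorphism_pushforward {g : τ → σ} (hfg : ∀ i, f (g i) = i)
    (hstep : ∀ p q, f p = f q → ∀ a, (M.step p a).map f = (M.step q a).map f)
    (hacc : ∀ p q, f p = f q → (p ∈ M.accept ↔ q ∈ M.accept)) :
    M.IsMorphism (M.pushforward f g) f where
  map_start := rfl
  step_map q a := hstep _ _ (hfg (f q)) a
  map_mem_accept_iff q := hacc _ _ (hfg (f q))

end Morphism

section Minimum

def IsMinimum (M : PDFA α σ) [Fintype σ] : Prop :=
  ∀ (m : ℕ) (D : PDFA α (Fin m)), D.Trim → D.language = M.language → Fintype.card σ ≤ m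

variable [Fintype σ] {A : PDFA α σ}

theorem IsMinimum.eq_of_residual_eq (hmin : A.IsMinimum) (hA : A.Trim) {q₁ q₂ : σ}
    (h : A.residual q₁ = A.residual q₂) : q₁ = q₂ := by
  classical
  by_contra hne
  let e := Fintype.equivFin (Quotient (Setoid.ker A.residual))
  let f : σ → Fin _ := fun q => e ⟦q⟧
  have hf : ∀ p q, f p = f q ↔ A.residual p = A.residual q := fun p q =>
    e.injective.eq_iff.trans Quotient.eq
  have hsurj : Function.Surjective f := e.surjective.comp Quotient.mk_surjective
  have hmor := A.isMorphism_pushforward (f := f) (g := fun i => (e.symm i).out)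
    (fun i => by simp [f])
    (fun p q hpq => map_step_eq_of_residual_eq hA.residual_nonempty
      (fun p q => (hf p q).2) ((hf p q).1 hpq))
    (fun p q hpq => by rw [← nil_mem_residual_iff, ← nil_mem_residual_iff, (hf p q).1 hpq])
  have hle := hmin _ _ (hmor.trim hsurj hA) hmor.language_eq
  have hlt := Fintype.card_lt_of_surjective_not_injective f hsurj
    fun hinj => hne (hinj ((hf _ _).2 h))
  rw [Fintype.card_fin] at hlt
  omega

theorem IsMinimum.eval_eq_of_eval_eq (hmin : A.IsMinimum) (hA : A.Trim) {B : PDFA α τ}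
    (hL : B.language = A.language) {u v : List α} (hu : u ∈ A.prefLang)
    (hv : v ∈ A.prefLang) (huv : B.eval u = B.eval v) : A.eval u = A.eval v := by
  have hpref := B.prefLang_eq_of_language_eq hL
  obtain ⟨p, hp⟩ := A.exists_eval_eq_some_of_mem_prefLang hu
  obtain ⟨r, hr⟩ := A.exists_eval_eq_some_of_mem_prefLang hv
  obtain ⟨q, hq⟩ := B.exists_eval_eq_some_of_mem_prefLang (hpref ▸ hu)
  have hres : A.residual p = A.residual r := by
    rw [residual_eq_leftQuotient hp, residual_eq_leftQuotient hr, ← hL,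
      ← residual_eq_leftQuotient hq, ← residual_eq_leftQuotient (huv ▸ hq)]
  rw [hp, hr, hmin.eq_of_residual_eq hA hres]

end Minimum

section Entanglement

variable [LinearOrder α] [Fintype σ]

theorem card_le_ent {M : PDFA α σ} {S : Finset σ} (h : M.EntangledStates S) :
    S.card ≤ M.ent :=
  le_csSup ⟨Fintype.card σ, by rintro _ ⟨T, rfl, -⟩; exact T.card_le_univ⟩ ⟨S, rfl, h⟩

theorem ent_le {M : PDFA α σ} {n : ℕ} (h : ∀ S : Finset σ, M.EntangledStates S → S.card ≤ n) :
    M.ent ≤ n :=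
  csSup_le' (by rintro _ ⟨S, rfl, hS⟩; exact h S hS)

variable [Fintype τ]

theorem ent_le_ent_of_eval_determined {A : PDFA α σ} {B : PDFA α τ}
    (hpref : A.prefLang ⊆ B.prefLang)
    (hdet : ∀ u ∈ A.prefLang, ∀ v ∈ A.prefLang, B.eval u = B.eval v → A.eval u = A.eval v) :
    A.ent ≤ B.ent := by
  classical
  refine ent_le fun S ⟨x, hxA, hmono, hvisit⟩ => ?_
  have hxB : ∀ i, x i ∈ B.prefLang := fun i => hpref (hxA i)
  have hpair : ∀ q, ∃ q', q ∈ S →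
      ∃ᶠ i in atTop, A.eval (x i) = some q ∧ B.eval (x i) = some q' := by
    intro q
    by_cases hq : q ∈ S
    · have : ∃ᶠ i in atTop, ∃ q', A.eval (x i) = some q ∧ B.eval (x i) = some q' :=
        (frequently_atTop.2 (hvisit q hq)).mono fun i hi =>
          (B.exists_eval_eq_some_of_mem_prefLang (hxB i)).imp fun _ h => ⟨hi, h⟩
      exact (frequently_exists.1 this).imp fun _ h _ => h
    · exact ⟨B.start, fun h => absurd h hq⟩
  choose g hg using hpair
  have hinj : Set.InjOn g S := by
    intro q₁ h₁ q₂ h₂ hg₁₂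
    obtain ⟨i, hAi, hBi⟩ := (hg q₁ h₁).exists
    obtain ⟨j, hAj, hBj⟩ := (hg q₂ h₂).exists
    have h := hdet _ (hxA i) _ (hxA j) (by rw [hBi, hBj, hg₁₂])
    rw [hAi, hAj] at h
    exact Option.some_injective _ h
  have hent : B.EntangledStates (S.image g) := by
    refine ⟨x, hxB, hmono, ?_⟩
    simp only [Finset.coe_image, Set.forall_mem_image]
    exact fun q hq => frequently_atTop.1 ((hg q hq).mono fun _ h => h.2)
  calc S.card = (S.image g).card := (Finset.card_image_of_injOn hinj).symm
    _ ≤ B.ent := card_le_ent hent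

end Entanglement

end PDFA

theorem ent_minimal_of_minimum_dfa_general {α : Type*} [LinearOrder α] {σ σ' : Type*}
    [Fintype σ] [Fintype σ'] (A : PDFA α σ) (hA : A.Trim)
    (hmin : ∀ (m : ℕ) (D : PDFA α (Fin m)), D.Trim → D.language = A.language →
      Fintype.card σ ≤ m)
    (B : PDFA α σ') (hL : B.language = A.language) :
    A.ent ≤ B.ent :=
  PDFA.ent_le_ent_of_eval_determined (B.prefLang_eq_of_language_eq hL).ge
    fun _ hu _ hv huv => PDFA.IsMinimum.eval_eq_of_eval_eq hmin hA hL hu hv huv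

/-- Lemma: the entanglement of a regular language is realized by its minimum DFA:
if `A` is the minimum DFA recognizing `L`, then `ent(A) ≤ ent(B)` for every DFA `B`
recognizing `L`. -/
theorem ent_minimal_of_minimum_dfa {α : Type*} [LinearOrder α] {σ σ' : Type*}
    [Fintype σ] [Fintype σ'] (A : PDFA α σ) (hA : A.Trim)
    (hmin : ∀ (m : ℕ) (D : PDFA α (Fin m)), D.Trim → D.language = A.language →
      Fintype.card σ ≤ m)
    (B : PDFA α σ') (hB : B.Trim) (hL : B.language = A.language) :
    A.ent ≤ B.ent :=
  ent_minimal_of_minimum_dfa_general A hA hmin B hL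
end

section
/- Let B be a DFA and let V be a minimum-size e.c. decomposition of B. Then the equivalence relation ∼_V has finitely many classes on Pref(L(B)), and L(B) is a union of ∼_V-classes. -/
/-!
Let `u, u'` lie in the same block `W₀` of the decomposition and reach the same state `q`.
A block strictly between `u'` and `v` but not strictly between `u` and `v` meets the closed
interval between `u` and `u'`, so by convexity and disjointness it is `W₀`, which contains `u'`
and hence meets `I_q`. Thus `u` and `u'` have the same `∼_V`-class, so the classes are indexed
by pairs (block, state), of which there are finitely many. Saturation is immediate because
`∼_V`-equivalent words reach the same state.
-/

lemma min_le_and_le_max_of_lt_of_not_lt {β : Type*} [LinearOrder β] {a b c x : β}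
    (hbc : min b c < x ∧ x < max b c) (hac : ¬ (min a c < x ∧ x < max a c)) :
    min a b ≤ x ∧ x ≤ max a b := by
  obtain ⟨hlo, hhi⟩ := hbc
  rw [not_and_or, not_lt, not_lt] at hac
  simp only [min_def, max_def] at *
  split_ifs at * <;> rcases hac with hac | hac <;> constructor <;> order

namespace PDFA

variable {α σ : Type*}

lemma mem_language_iff_of_eval_eq (M : PDFA α σ) {u v : List α} (h : M.eval u = M.eval v) :
    u ∈ M.language ↔ v ∈ M.language := by
  simp only [language, Set.mem_ofPred_eq, h]

variable [LinearOrder α]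

def simVClass (M : PDFA α σ) (V : Set (Set (List α))) (u : List α) : Set (List α) :=
  {v | v ∈ M.prefLang ∧ M.simV V u v}

lemma ConvexIn.mem_of_min_le_of_le_max {M : PDFA α σ} {W : Set (List α)} (hW : M.ConvexIn W)
    {u u' v : List α} (hu : u ∈ W) (hu' : u' ∈ W) (hv : v ∈ M.prefLang)
    (hmin : min u.reverse u'.reverse ≤ v.reverse) (hmax : v.reverse ≤ max u.reverse u'.reverse) :
    v ∈ W := by
  rcases le_total u.reverse u'.reverse with h | h
  · exact hW hu hu' hv (by simpa [h] using hmin) (by simpa [h] using hmax)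
  · exact hW hu' hu hv (by simpa [h] using hmin) (by simpa [h] using hmax)

section Partition

variable (M : PDFA α σ) {V : Set (Set (List α))} (hsub : ⋃₀ V ⊆ M.prefLang)
  (hdisj : V.Pairwise Disjoint) (hconv : ∀ W ∈ V, M.ConvexIn W)
include hsub hdisj hconv

lemma simV_of_simV_of_mem_block {W₀ : Set (List α)} (hW₀ : W₀ ∈ V) {u u' v : List α}
    (hu : u ∈ W₀) (hu' : u' ∈ W₀) (heval : M.eval u = M.eval u') (hsim : M.simV V u v) :
    M.simV V u' v := by
  refine ⟨heval ▸ hsim.1, fun W hW hbetween => ?_⟩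
  by_cases hWW₀ : W = W₀
  · exact ⟨u', hWW₀ ▸ hu', rfl⟩
  have hstrict : ∀ w ∈ W,
      min u.reverse v.reverse < w.reverse ∧ w.reverse < max u.reverse v.reverse := by
    intro w hw
    by_contra hout
    have hw₀ : w ∈ W₀ :=
      have ⟨hmin, hmax⟩ := min_le_and_le_max_of_lt_of_not_lt (hbetween w hw) hout
      (hconv W₀ hW₀).mem_of_min_le_of_le_max hu hu' (hsub ⟨W, hW, hw⟩) hmin hmax
    exact Set.disjoint_left.mp (hdisj hW hW₀ hWW₀) hw hw₀
  obtain ⟨w, hw, hweval⟩ := hsim.2 W hW hstrict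
  exact ⟨w, hw, hweval.trans heval⟩

lemma simVClass_eq_of_mem_block {W₀ : Set (List α)} (hW₀ : W₀ ∈ V) {u u' : List α}
    (hu : u ∈ W₀) (hu' : u' ∈ W₀) (heval : M.eval u = M.eval u') :
    M.simVClass V u = M.simVClass V u' := by
  ext v
  exact and_congr_right fun _ =>
    ⟨M.simV_of_simV_of_mem_block hsub hdisj hconv hW₀ hu hu' heval,
      M.simV_of_simV_of_mem_block hsub hdisj hconv hW₀ hu' hu heval.symm⟩

end Partition

lemma finite_simVClasses_of_isECD [Finite σ] (M : PDFA α σ) {V : Set (Set (List α))}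
    (hfin : V.Finite) (hV : M.IsECD V) :
    {C | ∃ u ∈ M.prefLang, C = M.simVClass V u}.Finite := by
  obtain ⟨hunion, hdisj, hmem⟩ := hV
  have hconv : ∀ W ∈ V, M.ConvexIn W := fun W hW => (hmem W hW).1
  refine (hfin.biUnion fun W _ => Set.finite_iUnion fun q : Option σ =>
    (?_ : Set.Subsingleton {C | ∃ u ∈ W, M.eval u = q ∧ C = M.simVClass V u}).finite).subset ?_
  · rintro _ ⟨u, hu, rfl, rfl⟩ _ ⟨u', hu', heval, rfl⟩
    exact M.simVClass_eq_of_mem_block hunion.le hdisj hconv ‹W ∈ V› hu hu' heval.symm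
  · rintro _ ⟨u, hu, rfl⟩
    obtain ⟨W, hW, huW⟩ := hunion.ge hu
    exact Set.mem_biUnion hW (Set.mem_iUnion.mpr ⟨M.eval u, u, huW, rfl, rfl⟩)

end PDFA

theorem simV_finite_index_and_saturates_general {α σ : Type*} [LinearOrder α] [Fintype σ]
    (M : PDFA α σ)
    (V : Set (Set (List α))) (hV : M.IsMinECD V) :
    {C : Set (List α) | ∃ u ∈ M.prefLang, C = {v | v ∈ M.prefLang ∧ M.simV V u v}}.Finite ∧
    ∀ u ∈ M.prefLang, ∀ v ∈ M.prefLang, M.simV V u v →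
      (u ∈ M.language ↔ v ∈ M.language) :=
  ⟨M.finite_simVClasses_of_isECD hV.1 hV.2.1,
    fun _ _ _ _ hsim => M.mem_language_iff_of_eval_eq hsim.1⟩

/-- Lemma: for a minimum-size e.c. decomposition `V` of a (trim) DFA, `∼_V` has finitely
many classes on `Pref(L(B))` and `L(B)` is a union of `∼_V`-classes. -/
theorem simV_finite_index_and_saturates {α σ : Type*} [LinearOrder α] [Fintype σ]
    (M : PDFA α σ) (hM : M.Trim)
    (V : Set (Set (List α))) (hV : M.IsMinECD V) :
    {C : Set (List α) | ∃ u ∈ M.prefLang, C = {v | v ∈ M.prefLang ∧ M.simV V u v}}.Finite ∧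
    ∀ u ∈ M.prefLang, ∀ v ∈ M.prefLang, M.simV V u v →
      (u ∈ M.language ↔ v ∈ M.language) :=
  simV_finite_index_and_saturates_general M V hV
end
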